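/- The greatest common divisor $\gcd(q^k-1, d+D)$ divides $de$, and the minimal polynomial of $\gamma^{d+D}$ over $\mathbb{F}_q$ has degree $k$; equivalently, $\mathbb{F}_q(\gamma^{d+D}) = \mathbb{F}_{q^k}$. -/

import Mathlib

/-!
Write `N = q^k - 1` and `β = γ^(d+D)`. Since `e * (d + D) = d * e + N`, the gcd `g` of `N` and
`d + D` divides `d * e`, hence `g ≤ q - 1`, and `β` has order `N / g ≥ q^(k-1)`. On the other
hand `β` lies in `𝔽_q(β)`, a field with `q^j` elements where `j` is the degree of its minimal
polynomial, so the order of `β` divides `q^j - 1 < q^j`. This forces `j ≥ k`, while `j ≤ k`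
because `𝔽_q(β) ⊆ 𝔽_{q^k}`.
-/

theorem Nat.gcd_add_div_dvd_mul {N e : ℕ} (d : ℕ) (he : e ∣ N) :
    Nat.gcd N (d + N / e) ∣ d * e := by
  have h : Nat.gcd N (d + N / e) ∣ (d + N / e) * e := (Nat.gcd_dvd_right _ _).mul_right e
  rw [add_mul, Nat.div_mul_cancel he] at h
  exact (Nat.dvd_add_left (Nat.gcd_dvd_left _ _)).mp h

theorem Nat.pow_le_pow_sub_one_div {q g j k : ℕ} (hg0 : 0 < g) (hg : g ≤ q - 1) (hjk : j < k) :
    q ^ j ≤ (q ^ k - 1) / g := by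
  have hq : 2 ≤ q := by omega
  have hpos : 1 ≤ q ^ j := Nat.one_le_pow _ _ (by omega)
  have hsucc : q ^ (j + 1) ≤ q ^ k := Nat.pow_le_pow_right (by omega) hjk
  rw [Nat.le_div_iff_mul_le hg0]
  calc q ^ j * g ≤ q ^ j * (q - 1) := Nat.mul_le_mul_left _ hg
    _ = q ^ (j + 1) - q ^ j := by rw [Nat.mul_sub, mul_one, pow_succ]
    _ ≤ q ^ k - 1 := by omega

theorem Nat.le_of_div_dvd_pow_sub_one {q g j k : ℕ} (hg0 : 0 < g) (hg : g ≤ q - 1) (hj : 0 < j)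
    (h : (q ^ k - 1) / g ∣ q ^ j - 1) : k ≤ j := by
  by_contra! hjk
  have hqj : 1 < q ^ j := Nat.one_lt_pow hj.ne' (by omega)
  have := Nat.le_of_dvd (by omega) h
  have := Nat.pow_le_pow_sub_one_div hg0 hg hjk
  omega

section MinpolyOverFiniteField

variable {K L : Type*} [Field K] [Fintype K] [Field L] [Algebra K L] [Finite L]

theorem pow_card_pow_natDegree_minpoly (x : L) :
    x ^ Fintype.card K ^ (minpoly K x).natDegree = x := by
  have hx : IsIntegral K x := .of_finite K x
  let F := IntermediateField.adjoin K {x}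
  let _ : Fintype F := Fintype.ofFinite F
  have hF : Fintype.card F = Fintype.card K ^ (minpoly K x).natDegree := by
    rw [Module.card_eq_pow_finrank (K := K) (V := F), IntermediateField.adjoin.finrank hx]
  have := congrArg Subtype.val
    (FiniteField.pow_card (⟨x, IntermediateField.mem_adjoin_simple_self K x⟩ : F))
  rwa [SubmonoidClass.coe_pow, hF] at this

theorem orderOf_dvd_card_pow_natDegree_minpoly_sub_one (u : Lˣ) :
    orderOf u ∣ Fintype.card K ^ (minpoly K (u : L)).natDegree - 1 := by
  apply orderOf_dvd_of_pow_eq_one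
  have hpos : 0 < Fintype.card K ^ (minpoly K (u : L)).natDegree := by positivity
  apply mul_left_cancel (a := u)
  rw [← pow_succ', Nat.sub_add_cancel hpos, mul_one]
  exact Units.ext (by rw [Units.val_pow_eq_pow_val, pow_card_pow_natDegree_minpoly])

end MinpolyOverFiniteField

theorem minpoly_gamma_pow_dD_degree_general
    (q k d e D : ℕ)
    (Fq Fqk : Type) [Field Fq] [Field Fqk] [Fintype Fq] [Fintype Fqk]
    [Algebra Fq Fqk]
    (hcard : Fintype.card Fq = q)
    (hqk : Fintype.card Fqk = q ^ k)
    (γ : Fqkˣ) (hγ : ∀ x : Fqkˣ, x ∈ Subgroup.zpowers γ)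
    (hde : d * e ∣ q - 1)
    (hD : D = (q ^ k - 1) / e) :
    Nat.gcd (q ^ k - 1) (d + D) ∣ d * e ∧
    (minpoly Fq ((γ : Fqk) ^ (d + D))).natDegree = k := by
  subst hD
  have hq : 1 < q := hcard ▸ Fintype.one_lt_card
  have hqk1 : 1 < q ^ k := hqk ▸ Fintype.one_lt_card
  have he : e ∣ q ^ k - 1 :=
    (dvd_mul_left e d).trans (hde.trans (by simpa using Nat.sub_dvd_pow_sub_pow q 1 k))
  have hgcd := Nat.gcd_add_div_dvd_mul d he
  have hγord : orderOf γ = q ^ k - 1 := by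
    rw [orderOf_eq_card_of_forall_mem_zpowers hγ, Nat.card_units, Nat.card_eq_fintype_card, hqk]
  refine ⟨hgcd, le_antisymm ?_ ?_⟩
  · have hfinrank : Module.finrank Fq Fqk = k := by
      apply Nat.pow_right_injective hq
      simp only [← hcard, ← Module.card_eq_pow_finrank, hqk]
    exact hfinrank ▸ minpoly.natDegree_le _
  · refine Nat.le_of_div_dvd_pow_sub_one (Nat.gcd_pos_of_pos_left _ (by omega))
      (Nat.le_of_dvd (by omega) (hgcd.trans hde)) (minpoly.natDegree_pos (.of_finite Fq _)) ?_
    have := orderOf_dvd_card_pow_natDegree_minpoly_sub_one (K := Fq) (γ ^ (d + (q ^ k - 1) / e))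
    rwa [orderOf_pow, hγord, Units.val_pow_eq_pow_val, hcard] at this

/-- `gcd(q^k - 1, d + D)` divides `d·e`, and the minimal polynomial of `γ^(d+D)`
over `𝔽_q` has degree `k`. -/
theorem minpoly_gamma_pow_dD_degree
    (q k d e D : ℕ)
    (hq : IsPrimePow q) (hk : 1 ≤ k)
    (Fq Fqk : Type) [Field Fq] [Field Fqk] [Fintype Fq] [Fintype Fqk]
    [Algebra Fq Fqk]
    (hcard : Fintype.card Fq = q)
    (hqk : Fintype.card Fqk = q ^ k)
    (γ : Fqkˣ) (hγ : ∀ x : Fqkˣ, x ∈ Subgroup.zpowers γ)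
    (hd : 0 < d) (he : 1 < e)
    (hde : d * e ∣ q - 1)
    (hD : D = (q ^ k - 1) / e) :
    Nat.gcd (q ^ k - 1) (d + D) ∣ d * e ∧
    (minpoly Fq ((γ : Fqk) ^ (d + D))).natDegree = k :=
  minpoly_gamma_pow_dD_degree_general q k d e D Fq Fqk hcard hqk γ hγ hde hD
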